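/- arXiv:1405.6925 — 2 statements merged into one kernel-verified Lean document; each statement's English description precedes it below -/
import Mathlib

section
/- Let Γ ⊂ Sp(V) be finite, let Γ̲ be a minimal parabolic subgroup (rank one, i.e. dim V − dim V^{Γ̲} = 2), and let U = {v ∈ V^{Γ̲} : Γ_v = Γ̲}. Then the complement of U in V^{Γ̲} has complex codimension at least 2. -/
/-!
Fixed subspaces of subgroups of a finite symplectic group are symplectic (averaging over the
subgroup), hence even-dimensional. A vector of `V^{Γ̲}` whose stabilizer is larger than `Γ̲` is
fixed by some `g ∉ Γ̲`, so it lies in the fixed space of `Γ̲ ⊔ ⟨g⟩`. That space is a proper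
subspace of `V^{Γ̲}`, since it misses a vector with stabilizer exactly `Γ̲`; being
even-dimensional, it has codimension at least two.
-/

open Module

/-- The submodule of vectors fixed by every element of a subgroup `P` of `G`. -/
def fixedOf {V : Type*} [AddCommGroup V] [Module ℂ V]
    {G : Type*} [Group G] (ρ : G →* (V ≃ₗ[ℂ] V)) (P : Subgroup G) : Submodule ℂ V where
  carrier := {v | ∀ g ∈ P, ρ g v = v}
  add_mem' := by
    intro a b ha hb g hg
    simp [map_add, ha g hg, hb g hg]
  zero_mem' := by intro g _; simp
  smul_mem' := by
    intro c a ha g hg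
    simp [map_smul, ha g hg]

theorem LinearMap.BilinForm.even_finrank_of_isAlt_of_nondegenerate {K V : Type*} [Field K]
    [NeZero (2 : K)] [AddCommGroup V] [Module K V] [FiniteDimensional K V]
    {ω : LinearMap.BilinForm K V} (halt : ω.IsAlt) (hnd : ω.Nondegenerate) :
    Even (finrank K V) := by
  by_contra hodd
  rw [Nat.not_even_iff_odd] at hodd
  let M := LinearMap.BilinForm.toMatrix (finBasis K V) ω
  have hskew : M.transpose = -M := by
    ext i j
    simp only [M, Matrix.transpose_apply, Matrix.neg_apply, LinearMap.BilinForm.toMatrix_apply,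
      halt.neg_eq]
  have hdet : M.det = -M.det := by
    conv_lhs => rw [← Matrix.det_transpose, hskew, Matrix.det_neg, Fintype.card_fin,
      hodd.neg_one_pow, neg_one_mul]
  refine (LinearMap.BilinForm.nondegenerate_iff_det_ne_zero (finBasis K V)).mp hnd ?_
  have : (2 : K) * M.det = 0 := by linear_combination hdet
  exact (mul_eq_zero.mp this).resolve_left two_ne_zero

theorem Submodule.finrank_add_two_le_of_lt {K V : Type*} [Field K] [AddCommGroup V]
    [Module K V] [FiniteDimensional K V] {W W' : Submodule K V} (h : W < W')
    (hW : Even (finrank K W)) (hW' : Even (finrank K W')) : finrank K W + 2 ≤ finrank K W' := by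
  have := Submodule.finrank_lt_finrank_of_lt h
  obtain ⟨m, hm⟩ := hW
  obtain ⟨n, hn⟩ := hW'
  omega

section FixedSubspace

variable {V : Type*} [AddCommGroup V] [Module ℂ V] {G : Type*} [Group G]
  (ρ : G →* (V ≃ₗ[ℂ] V))

theorem mem_fixedOf_iff_le_comap_stabilizer (H : Subgroup G) (v : V) :
    v ∈ fixedOf ρ H ↔ H ≤ (MulAction.stabilizer (V ≃ₗ[ℂ] V) v).comap ρ :=
  Iff.rfl

theorem mem_fixedOf_sup_zpowers {P : Subgroup G} {g : G} {v : V} :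
    v ∈ fixedOf ρ (P ⊔ Subgroup.zpowers g) ↔ v ∈ fixedOf ρ P ∧ ρ g v = v := by
  simp only [mem_fixedOf_iff_le_comap_stabilizer, sup_le_iff, Subgroup.zpowers_le]
  rfl

theorem fixedOf_antitone : Antitone (fixedOf ρ) :=
  fun _ _ hPQ _ hv g hg => hv g (hPQ hg)

theorem sum_apply_mem_fixedOf (H : Subgroup G) [Fintype H] (u : V) :
    ∑ h : H, ρ h u ∈ fixedOf ρ H := by
  intro g hg
  rw [map_sum]
  exact Fintype.sum_equiv (Equiv.mulLeft ⟨g, hg⟩) _ _ fun h => by simp [map_mul]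

theorem fixedOf_sup_zpowers_lt {P : Subgroup G} {v : V} (hv : ∀ g : G, g ∈ P ↔ ρ g v = v)
    {g : G} (hg : g ∉ P) : fixedOf ρ (P ⊔ Subgroup.zpowers g) < fixedOf ρ P := by
  refine lt_of_le_of_ne (fixedOf_antitone ρ le_sup_left) fun h => hg ?_
  have hvP : v ∈ fixedOf ρ P := fun k hk => (hv k).mp hk
  rw [← h, mem_fixedOf_sup_zpowers] at hvP
  exact (hv g).mpr hvP.2

end FixedSubspace

section Symplectic

variable {V : Type*} [AddCommGroup V] [Module ℂ V] {G : Type*} [Group G]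
  {ρ : G →* (V ≃ₗ[ℂ] V)} {ω : LinearMap.BilinForm ℂ V}

/-- Summing over `H` projects onto the fixed subspace up to the factor `|H|`, and pairing with
an `H`-fixed vector does not see the difference. -/
theorem nondegenerate_restrict_fixedOf [FiniteDimensional ℂ V] (hnd : ω.Nondegenerate)
    (hsymp : ∀ g : G, ∀ x y : V, ω (ρ g x) (ρ g y) = ω x y) (H : Subgroup G) [Finite H] :
    (ω.restrict (fixedOf ρ H)).Nondegenerate := by
  have : Fintype H := Fintype.ofFinite H
  refine .ofSeparatingLeft fun x hx => Subtype.ext <| hnd.1 x fun u => ?_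
  have hsum : ω x (∑ h : H, ρ h u) = Fintype.card H • ω x u := by
    rw [map_sum, ← Finset.card_univ, ← Finset.sum_const]
    refine Finset.sum_congr rfl fun h _ => ?_
    rw [← hsymp h x u, x.2 h h.2]
  have hzero : Fintype.card H • ω x u = 0 := hsum ▸ hx ⟨_, sum_apply_mem_fixedOf ρ H u⟩
  simpa [Fintype.card_ne_zero] using hzero

theorem even_finrank_fixedOf [FiniteDimensional ℂ V] (halt : ω.IsAlt) (hnd : ω.Nondegenerate)
    (hsymp : ∀ g : G, ∀ x y : V, ω (ρ g x) (ρ g y) = ω x y) (H : Subgroup G) [Finite H] :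
    Even (finrank ℂ (fixedOf ρ H)) :=
  LinearMap.BilinForm.even_finrank_of_isAlt_of_nondegenerate (fun x => halt x)
    (nondegenerate_restrict_fixedOf hnd hsymp H)

end Symplectic

theorem complement_of_regular_locus_codim_two_general
    (V : Type*) [AddCommGroup V] [Module ℂ V] [FiniteDimensional ℂ V]
    (ω : LinearMap.BilinForm ℂ V) (halt : ω.IsAlt) (hnd : ω.Nondegenerate)
    (G : Type*) [Group G] [Finite G] (ρ : G →* (V ≃ₗ[ℂ] V))
    (hsymp : ∀ g : G, ∀ x y : V, ω (ρ g x) (ρ g y) = ω x y)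
    (P : Subgroup G)
    (hpar : ∃ v : V, ∀ g : G, g ∈ P ↔ ρ g v = v) :
    ∃ (k : ℕ) (W : Fin k → Submodule ℂ V),
      (∀ j, W j ≤ fixedOf ρ P ∧ finrank ℂ (W j) + 2 ≤ finrank ℂ (fixedOf ρ P)) ∧
      (fixedOf ρ P : Set V) \ {v : V | v ∈ fixedOf ρ P ∧ ∀ g : G, ρ g v = v ↔ g ∈ P}
        ⊆ ⋃ j, (W j : Set V) := by
  obtain ⟨v₀, hv₀⟩ := hpar
  let W : {g : G // g ∉ P} → Submodule ℂ V := fun g => fixedOf ρ (P ⊔ Subgroup.zpowers g.1)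
  have hW_lt : ∀ g, W g < fixedOf ρ P := fun g => fixedOf_sup_zpowers_lt ρ hv₀ g.2
  have hW_codim : ∀ g, finrank ℂ (W g) + 2 ≤ finrank ℂ (fixedOf ρ P) := fun g =>
    Submodule.finrank_add_two_le_of_lt (hW_lt g) (even_finrank_fixedOf halt hnd hsymp _)
      (even_finrank_fixedOf halt hnd hsymp P)
  have hcover : (fixedOf ρ P : Set V) \ {v | v ∈ fixedOf ρ P ∧ ∀ g : G, ρ g v = v ↔ g ∈ P}
      ⊆ ⋃ g, (W g : Set V) := by
    rintro v ⟨hvP, hv⟩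
    obtain ⟨g, hgv, hgP⟩ : ∃ g, ρ g v = v ∧ g ∉ P := by
      by_contra! h
      exact hv ⟨hvP, fun g => ⟨h g, hvP g⟩⟩
    exact Set.mem_iUnion.mpr ⟨⟨g, hgP⟩, (mem_fixedOf_sup_zpowers ρ).mpr ⟨hvP, hgv⟩⟩
  obtain ⟨k, ⟨e⟩⟩ := Finite.exists_equiv_fin {g : G // g ∉ P}
  refine ⟨k, fun j => W (e.symm j), fun j => ⟨(hW_lt _).le, hW_codim _⟩, ?_⟩
  rwa [e.symm.surjective.iUnion_comp fun g => (W g : Set V)]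

/-- Let `Γ̲` be a minimal parabolic subgroup of a finite group `Γ ⊂ Sp(V)` and
`U = {v ∈ V^{Γ̲} : Γ_v = Γ̲}`. Then the complement of `U` in `V^{Γ̲}` is contained in a
finite union of linear subspaces of `V^{Γ̲}` of codimension at least 2. -/
theorem complement_of_regular_locus_codim_two
    (V : Type*) [AddCommGroup V] [Module ℂ V] [FiniteDimensional ℂ V]
    (ω : LinearMap.BilinForm ℂ V) (halt : ω.IsAlt) (hnd : ω.Nondegenerate)
    (G : Type*) [Group G] [Finite G] (ρ : G →* (V ≃ₗ[ℂ] V))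
    (hsymp : ∀ g : G, ∀ x y : V, ω (ρ g x) (ρ g y) = ω x y)
    (P : Subgroup G)
    (hpar : ∃ v : V, ∀ g : G, g ∈ P ↔ ρ g v = v)
    (hmin : finrank ℂ (fixedOf ρ P) + 2 = finrank ℂ V) :
    ∃ (k : ℕ) (W : Fin k → Submodule ℂ V),
      (∀ j, W j ≤ fixedOf ρ P ∧ finrank ℂ (W j) + 2 ≤ finrank ℂ (fixedOf ρ P)) ∧
      (fixedOf ρ P : Set V) \ {v : V | v ∈ fixedOf ρ P ∧ ∀ g : G, ρ g v = v ↔ g ∈ P}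
        ⊆ ⋃ j, (W j : Set V) :=
  complement_of_regular_locus_codim_two_general V ω halt hnd G ρ hsymp P hpar
end

section
/- Let Γ ⊂ Sp(V) be finite and for each conjugacy class B of minimal parabolic subgroups fix a representative Γ_B. Then the natural map ⨆_B (Γ_B \ {1})/Ñ_Γ(Γ_B) → S/Γ, sending an element of a minimal parabolic to its Γ-conjugacy class, is a bijection onto the set of Γ-conjugacy classes of symplectic reflections. -/
/-!
A symplectic automorphism `f` of finite order with `rank (1 - f) ≤ 1` is trivial: the image of
`1 - f` is a line, hence isotropic, which forces `(1 - f)² = 0`, and a unipotent element of finite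
order in characteristic zero is `1`. So every nontrivial element of a minimal parabolic `P` fixes
exactly `V^P`, and `P` is the pointwise stabilizer of the fixed space of each of its nontrivial
elements; `Γ`-conjugacy of such elements thus becomes conjugacy of the parabolics containing them.
Conversely the pointwise stabilizer of the fixed space of a symplectic reflection is a minimal
parabolic, because `V` is not a finite union of proper subspaces.
-/

open Module

/-- `P` is a minimal parabolic subgroup: the stabilizer of some vector, whose fixed space
has codimension 2. -/
def IsMinParabolic {V : Type*} [AddCommGroup V] [Module ℂ V] [FiniteDimensional ℂ V]
    {G : Type*} [Group G] (ρ : G →* (V ≃ₗ[ℂ] V)) (P : Subgroup G) : Prop :=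
  (∃ v : V, ∀ g : G, g ∈ P ↔ ρ g v = v) ∧
    finrank ℂ (fixedOf ρ P) + 2 = finrank ℂ V

open LinearMap

theorem one_sub_pow_of_mul_self_eq_zero {R : Type*} [Ring R] {T : R} (hT : T * T = 0) (n : ℕ) :
    (1 - T) ^ n = 1 - n • T := by
  induction n with
  | zero => simp
  | succ n ih =>
    rw [pow_succ, ih]
    simp only [sub_mul, mul_sub, one_mul, mul_one, smul_mul_assoc, hT, smul_zero, succ_nsmul]
    abel

namespace Module.End

variable {K V : Type*} [Field K] [AddCommGroup V] [Module K V]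

theorem eq_zero_of_mul_self_eq_zero_of_isOfFinOrder_one_sub [CharZero K] {T : End K V}
    (hT : T * T = 0) (h : IsOfFinOrder (1 - T)) : T = 0 := by
  obtain ⟨n, hn, hpow⟩ := isOfFinOrder_iff_pow_eq_one.mp h
  rw [one_sub_pow_of_mul_self_eq_zero hT, sub_eq_self, ← Nat.cast_smul_eq_nsmul K] at hpow
  exact (smul_eq_zero.mp hpow).resolve_left (Nat.cast_ne_zero.mpr hn.ne')

theorem mem_ker_one_sub_iff {f : End K V} {v : V} : v ∈ ker (1 - f) ↔ f v = v := by
  rw [mem_ker, LinearMap.sub_apply, one_apply, sub_eq_zero, eq_comm]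

end Module.End

namespace LinearMap.BilinForm

variable {K V : Type*} [Field K] [AddCommGroup V] [Module K V] {ω : LinearMap.BilinForm K V}
  {f : Module.End K V}

theorem IsAlt.apply_eq_zero_of_finrank_le_one [FiniteDimensional K V] (halt : ω.IsAlt)
    {W : Submodule K V} (hW : finrank K W ≤ 1) {a b : V} (ha : a ∈ W) (hb : b ∈ W) :
    ω a b = 0 := by
  obtain ⟨u, hu⟩ := finrank_le_one_iff.mp hW
  obtain ⟨c, hc⟩ := hu ⟨a, ha⟩
  obtain ⟨d, hd⟩ := hu ⟨b, hb⟩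
  rw [show a = c • (u : V) from congrArg Subtype.val hc.symm,
    show b = d • (u : V) from congrArg Subtype.val hd.symm]
  simp [halt.self_eq_zero]

theorem one_sub_mul_self_eq_zero_of_isotropic_range (hnd : ω.Nondegenerate)
    (hf : ∀ x y, ω (f x) (f y) = ω x y)
    (hiso : ∀ a ∈ range (1 - f), ∀ b ∈ range (1 - f), ω a b = 0) :
    (1 - f) * (1 - f) = 0 := by
  ext x
  set T := 1 - f
  refine hnd.1 (T (T x)) fun y => ?_
  -- in `ω (f a) (f y) = ω a y` with `a = T x`, `f = 1 - T`, isotropy kills all but `ω (T a) y`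
  have h := hf (T x) y
  rw [show f = 1 - T by simp [T]] at h
  simp only [LinearMap.sub_apply, Module.End.one_apply, map_sub] at h
  have h₁ := hiso _ (mem_range_self T x) _ (mem_range_self T y)
  have h₂ := hiso _ (mem_range_self T (T x)) _ (mem_range_self T y)
  linear_combination -h - h₁ + h₂

theorem eq_one_of_finrank_range_one_sub_le_one [FiniteDimensional K V] [CharZero K]
    (halt : ω.IsAlt) (hnd : ω.Nondegenerate) (hf : ∀ x y, ω (f x) (f y) = ω x y)
    (hfin : IsOfFinOrder f) (hrank : finrank K (range (1 - f)) ≤ 1) : f = 1 := by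
  have hsq := one_sub_mul_self_eq_zero_of_isotropic_range hnd hf
    fun a ha b hb => halt.apply_eq_zero_of_finrank_le_one hrank ha hb
  have := Module.End.eq_zero_of_mul_self_eq_zero_of_isOfFinOrder_one_sub hsq
    (by rwa [sub_sub_cancel])
  exact (sub_eq_zero.mp this).symm

end LinearMap.BilinForm

section Representation

variable {V : Type*} [AddCommGroup V] [Module ℂ V] {G : Type*} [Group G]

def fixingOf (ρ : G →* (V ≃ₗ[ℂ] V)) (W : Submodule ℂ V) : Subgroup G :=
  (fixingSubgroup (V ≃ₗ[ℂ] V) (W : Set V)).comap ρ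

variable {ρ : G →* (V ≃ₗ[ℂ] V)}

theorem mem_fixingOf {W : Submodule ℂ V} {g : G} :
    g ∈ fixingOf ρ W ↔ ∀ w ∈ W, ρ g w = w :=
  mem_fixingSubgroup_iff _

theorem le_fixedOf_iff {W : Submodule ℂ V} {P : Subgroup G} :
    W ≤ fixedOf ρ P ↔ P ≤ fixingOf ρ W :=
  ⟨fun h _ hg => mem_fixingOf.mpr fun _ hw => h hw _ hg,
    fun h _ hw _ hg => mem_fixingOf.mp (h hg) _ hw⟩

theorem fixedOf_le_ker_one_sub {P : Subgroup G} {s : G} (hs : s ∈ P) :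
    fixedOf ρ P ≤ ker (1 - (ρ s : V →ₗ[ℂ] V)) :=
  fun _ hv => Module.End.mem_ker_one_sub_iff.mpr (hv s hs)

theorem mem_fixingOf_ker_one_sub (s : G) : s ∈ fixingOf ρ (ker (1 - (ρ s : V →ₗ[ℂ] V))) :=
  mem_fixingOf.mpr fun _ hw => Module.End.mem_ker_one_sub_iff.mp hw

theorem fixedOf_fixingOf_ker_one_sub (s : G) :
    fixedOf ρ (fixingOf ρ (ker (1 - (ρ s : V →ₗ[ℂ] V)))) =
      ker (1 - (ρ s : V →ₗ[ℂ] V)) :=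
  (fixedOf_le_ker_one_sub (mem_fixingOf_ker_one_sub s)).antisymm (le_fixedOf_iff.mpr le_rfl)

theorem fixingOf_fixedOf_of_stabilizer {P : Subgroup G} {v : V}
    (hv : ∀ g, g ∈ P ↔ ρ g v = v) : fixingOf ρ (fixedOf ρ P) = P := by
  have hvP : v ∈ fixedOf ρ P := fun g hg => (hv g).mp hg
  exact le_antisymm (fun g hg => (hv g).mpr (mem_fixingOf.mp hg v hvP))
    (le_fixedOf_iff.mp le_rfl)

theorem exists_stabilizer_eq_fixingOf [Finite G] (W : Submodule ℂ V) :
    ∃ v : V, ∀ g, g ∈ fixingOf ρ W ↔ ρ g v = v := by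
  let p : {g : G // g ∉ fixingOf ρ W} → Submodule ℂ W := fun g =>
    (ker (1 - (ρ g : V →ₗ[ℂ] V))).comap W.subtype
  have hp : ∀ g, p g ≠ ⊤ := fun g htop => g.2 <| mem_fixingOf.mpr fun w hw =>
    Module.End.mem_ker_one_sub_iff.mp
      (show (⟨w, hw⟩ : W) ∈ p g from htop ▸ Submodule.mem_top)
  obtain ⟨v, hv⟩ : ∃ v : W, v ∉ ⋃ g, (p g : Set W) := by
    by_contra! h
    obtain ⟨g, hg⟩ := Subspace.exists_eq_top_of_iUnion_eq_univ (Set.eq_univ_of_forall h)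
    exact hp g hg
  refine ⟨v, fun g => ⟨fun hg => mem_fixingOf.mp hg v v.2, fun hgv => ?_⟩⟩
  by_contra hg
  exact hv (Set.mem_iUnion.mpr ⟨⟨g, hg⟩, Module.End.mem_ker_one_sub_iff.mpr hgv⟩)

theorem map_conj_fixingOf (W : Submodule ℂ V) (g : G) :
    (fixingOf ρ W).map (MulAut.conj g).toMonoidHom =
      fixingOf ρ (W.map (ρ g : V →ₗ[ℂ] V)) := by
  ext x
  simp only [Subgroup.mem_map_equiv, mem_fixingOf, Submodule.mem_map, forall_exists_index,
    and_imp, forall_apply_eq_imp_iff₂, MulAut.conj_symm_apply, map_mul, map_inv,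
    LinearEquiv.mul_apply, LinearEquiv.coe_coe, LinearEquiv.coe_inv, LinearEquiv.symm_apply_eq]

theorem ker_one_sub_conj (s g : G) :
    ker (1 - (ρ (g * s * g⁻¹) : V →ₗ[ℂ] V)) =
      (ker (1 - (ρ s : V →ₗ[ℂ] V))).map (ρ g : V →ₗ[ℂ] V) := by
  ext v
  rw [Submodule.mem_map_equiv, Module.End.mem_ker_one_sub_iff, Module.End.mem_ker_one_sub_iff]
  simp only [map_mul, map_inv]
  exact (ρ g).eq_symm_apply.symm

theorem two_le_finrank_range_one_sub [FiniteDimensional ℂ V] [Finite G]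
    {ω : LinearMap.BilinForm ℂ V} (halt : ω.IsAlt) (hnd : ω.Nondegenerate)
    (hsymp : ∀ g : G, ∀ x y : V, ω (ρ g x) (ρ g y) = ω x y) (hinj : Function.Injective ρ)
    {s : G} (hs : s ≠ 1) : 2 ≤ finrank ℂ (range (1 - (ρ s : V →ₗ[ℂ] V))) := by
  by_contra! hrank
  have hfin : IsOfFinOrder (ρ s : V →ₗ[ℂ] V) :=
    (LinearEquiv.automorphismGroup.toLinearMapMonoidHom.comp ρ).isOfFinOrder
      (isOfFinOrder_of_finite s)
  have h1 := BilinForm.eq_one_of_finrank_range_one_sub_le_one halt hnd (hsymp s) hfin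
    (by omega)
  exact hs (hinj (by rw [map_one]; exact LinearEquiv.toLinearMap_injective h1))

variable [FiniteDimensional ℂ V] {P : Subgroup G} {s : G}

theorem finrank_range_one_sub_le_two (hP : IsMinParabolic ρ P) (hs : s ∈ P) :
    finrank ℂ (range (1 - (ρ s : V →ₗ[ℂ] V))) ≤ 2 := by
  have := finrank_range_add_finrank_ker (1 - (ρ s : V →ₗ[ℂ] V))
  have := Submodule.finrank_mono (fixedOf_le_ker_one_sub (ρ := ρ) hs)
  have := hP.2
  omega

theorem ker_one_sub_eq_fixedOf (hP : IsMinParabolic ρ P) (hs : s ∈ P)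
    (h2 : finrank ℂ (range (1 - (ρ s : V →ₗ[ℂ] V))) = 2) :
    ker (1 - (ρ s : V →ₗ[ℂ] V)) = fixedOf ρ P := by
  refine (Submodule.eq_of_le_of_finrank_eq (fixedOf_le_ker_one_sub hs) ?_).symm
  have := finrank_range_add_finrank_ker (1 - (ρ s : V →ₗ[ℂ] V))
  have := hP.2
  omega

theorem eq_fixingOf_ker_one_sub (hP : IsMinParabolic ρ P) (hs : s ∈ P)
    (h2 : finrank ℂ (range (1 - (ρ s : V →ₗ[ℂ] V))) = 2) :
    P = fixingOf ρ (ker (1 - (ρ s : V →ₗ[ℂ] V))) := by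
  obtain ⟨v, hv⟩ := hP.1
  rw [ker_one_sub_eq_fixedOf hP hs h2, fixingOf_fixedOf_of_stabilizer hv]

theorem isMinParabolic_fixingOf_ker_one_sub [Finite G]
    (h2 : finrank ℂ (range (1 - (ρ s : V →ₗ[ℂ] V))) = 2) :
    IsMinParabolic ρ (fixingOf ρ (ker (1 - (ρ s : V →ₗ[ℂ] V)))) := by
  obtain ⟨v, hv⟩ :=
    exists_stabilizer_eq_fixingOf (ρ := ρ) (ker (1 - (ρ s : V →ₗ[ℂ] V)))
  refine ⟨⟨v, hv⟩, ?_⟩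
  rw [fixedOf_fixingOf_ker_one_sub]
  have := finrank_range_add_finrank_ker (1 - (ρ s : V →ₗ[ℂ] V))
  omega

end Representation

/-- The natural map `⨆_B (Γ_B \ {1})/Ñ_Γ(Γ_B) → S/Γ` is a bijection: every nontrivial
element of a minimal parabolic is a symplectic reflection; every symplectic reflection is
conjugate into one of the chosen representatives; and two nontrivial elements of the
representatives are `Γ`-conjugate iff they lie in the same representative and are conjugate
by an element of its normalizer. -/
theorem minimal_parabolic_classes_biject_with_reflection_classes
    (V : Type*) [AddCommGroup V] [Module ℂ V] [FiniteDimensional ℂ V]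
    (ω : LinearMap.BilinForm ℂ V) (halt : ω.IsAlt) (hnd : ω.Nondegenerate)
    (G : Type*) [Group G] [Finite G] (ρ : G →* (V ≃ₗ[ℂ] V))
    (hinj : Function.Injective ρ)
    (hsymp : ∀ g : G, ∀ x y : V, ω (ρ g x) (ρ g y) = ω x y)
    (ι : Type*) (rep : ι → Subgroup G)
    (hrep : ∀ i, IsMinParabolic ρ (rep i))
    (hnonconj : ∀ i j : ι,
      (∃ g : G, Subgroup.map (MulAut.conj g).toMonoidHom (rep i) = rep j) → i = j)
    (hcomplete : ∀ P : Subgroup G, IsMinParabolic ρ P →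
      ∃ (i : ι) (g : G), Subgroup.map (MulAut.conj g).toMonoidHom P = rep i) :
    (∀ i : ι, ∀ s ∈ rep i, s ≠ 1 →
        finrank ℂ (LinearMap.range (1 - (ρ s : V →ₗ[ℂ] V))) = 2) ∧
    (∀ s : G, finrank ℂ (LinearMap.range (1 - (ρ s : V →ₗ[ℂ] V))) = 2 →
        ∃ (i : ι) (g : G), g * s * g⁻¹ ∈ rep i) ∧
    (∀ (i j : ι) (s t : G), s ∈ rep i → s ≠ 1 → t ∈ rep j → t ≠ 1 →
        (∃ g : G, g * s * g⁻¹ = t) →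
        i = j ∧ ∃ n ∈ Subgroup.normalizer (rep i : Set G), n * s * n⁻¹ = t) := by
  have hreflection :
      ∀ i, ∀ s ∈ rep i, s ≠ 1 → finrank ℂ (range (1 - (ρ s : V →ₗ[ℂ] V))) = 2 :=
    fun i _ hs hs1 => (finrank_range_one_sub_le_two (hrep i) hs).antisymm
      (two_le_finrank_range_one_sub halt hnd hsymp hinj hs1)
  refine ⟨hreflection, fun s hs => ?_, ?_⟩
  · obtain ⟨i, g, hg⟩ := hcomplete _ (isMinParabolic_fixingOf_ker_one_sub hs)
    exact ⟨i, g, hg ▸ Subgroup.mem_map_of_mem _ (mem_fixingOf_ker_one_sub s)⟩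
  · rintro i j s _ hs hs1 ht ht1 ⟨g, rfl⟩
    have hij : (rep i).map (MulAut.conj g).toMonoidHom = rep j := by
      rw [eq_fixingOf_ker_one_sub (hrep i) hs (hreflection i s hs hs1),
        eq_fixingOf_ker_one_sub (hrep j) ht (hreflection j _ ht ht1), map_conj_fixingOf,
        ker_one_sub_conj]
    obtain rfl := hnonconj i j ⟨g, hij⟩
    exact ⟨rfl, g, Subgroup.mem_normalizer_iff_map_conj_eq.mpr hij, rfl⟩
end
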